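/- Let d ≥ 1, let X and Y be independent ℝ^d-valued random variables each with density f with respect to Lebesgue measure, let H be an invertible d×d real matrix, let K : ℝ^d → ℝ be bounded, measurable, compactly supported and even (K(−u) = K(u) for all u), and let ρ : ℝ^d → ℝ be bounded and measurable. Then for all x, t ∈ ℝ^d, E[K_H(X − x) K_H(X − t) K_H(Y − x) K_H(Y − t) ρ(X − Y)²] = |det H|⁻² ∫∫_{ℝ^d×ℝ^d} K(−p + H⁻¹(x − t)) K(−q + H⁻¹(x − t)) K(p) K(q) ρ(H(p − q))² f(t + Hp) f(t + Hq) dp dq. -/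

import Mathlib

/-!
By independence, the expectation is the integral of the integrand `G (u, v)` against
`f u * f v du dv` (Fubini applies because `K` and `ρ` are bounded). The affine substitutions
`u = t + H p`, `v = t + H q` each contribute a Jacobian `|det H|`, which cancels two of the four
factors `|det H|⁻¹` in `G`; the remaining `K (H⁻¹ (u - x)) = K (p - H⁻¹ (x - t))` is put in the
stated form by the evenness of `K`.
-/

open MeasureTheory ProbabilityTheory Filter
open scoped ENNReal NNReal Topology

noncomputable section

/-- The rescaled kernel `K_H(v) = |det H|⁻¹ * K (H⁻¹ v)`. -/
def kernelScaled {d : ℕ} (H : Matrix (Fin d) (Fin d) ℝ) (K : (Fin d → ℝ) → ℝ)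
    (v : Fin d → ℝ) : ℝ :=
  |H.det|⁻¹ * K (H⁻¹.mulVec v)

section

variable {Ω α β E : Type*} [MeasurableSpace Ω] [MeasurableSpace α] [MeasurableSpace β]
  [NormedAddCommGroup E] [NormedSpace ℝ E]

theorem ProbabilityTheory.IndepFun.integral_comp_prodMk {μ : Measure Ω} [IsFiniteMeasure μ]
    {X : Ω → α} {Y : Ω → β} (hXY : IndepFun X Y μ) (hX : AEMeasurable X μ)
    (hY : AEMeasurable Y μ) {g : α × β → E}
    (hg : Integrable g ((μ.map X).prod (μ.map Y))) :
    ∫ ω, g (X ω, Y ω) ∂μ = ∫ u, ∫ v, g (u, v) ∂(μ.map Y) ∂(μ.map X) := by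
  have hmap := (indepFun_iff_map_prod_eq_prod_map_map hX hY).mp hXY
  rw [← integral_prod g hg, ← hmap, integral_map (hX.prodMk hY) (hmap ▸ hg.aestronglyMeasurable)]

theorem integral_withDensity_ofReal {μ : Measure α} {f : α → ℝ} (hf : AEMeasurable f μ)
    (hf0 : ∀ᵐ y ∂μ, 0 ≤ f y) (g : α → E) :
    ∫ y, g y ∂(μ.withDensity fun y => ENNReal.ofReal (f y)) = ∫ y, f y • g y ∂μ := by
  rw [integral_withDensity_eq_integral_toReal_smul₀ hf.ennreal_ofReal
    (ae_of_all _ fun _ => ENNReal.ofReal_lt_top)]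
  refine integral_congr_ae (hf0.mono fun y hy => ?_)
  simp [ENNReal.toReal_ofReal hy]

end

section

open Matrix

variable {ι E : Type*} [Fintype ι] [DecidableEq ι] [NormedAddCommGroup E] [NormedSpace ℝ E]
  {H : Matrix ι ι ℝ}

theorem integral_comp_add_mulVec (hH : H.det ≠ 0) (t : ι → ℝ) (F : (ι → ℝ) → E) :
    ∫ p, F (t + H *ᵥ p) = |H.det|⁻¹ • ∫ v, F v := by
  have hemb : MeasurableEmbedding (toLin' H) :=
    (LinearMap.toContinuousLinearMap (toLin' H)).toContinuousLinearEquivOfDetNeZero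
      (by simpa using hH) |>.toHomeomorph.measurableEmbedding
  have := hemb.integral_map (μ := volume) (fun v => F (t + v))
  rw [Real.map_matrix_volume_pi_eq_smul_volume_pi hH, integral_smul_measure,
    integral_add_left_eq_self] at this
  simpa [ENNReal.toReal_ofReal, abs_inv] using this.symm

theorem integral_integral_comp_add_mulVec (hH : H.det ≠ 0) (t : ι → ℝ)
    (F : (ι → ℝ) → (ι → ℝ) → E) :
    ∫ p, ∫ q, F (t + H *ᵥ p) (t + H *ᵥ q) = (|H.det|⁻¹ ^ 2) • ∫ u, ∫ v, F u v := by
  simp_rw [integral_comp_add_mulVec hH t (F _), integral_smul,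
    integral_comp_add_mulVec hH t (fun u => ∫ v, F u v), smul_smul, sq]

end

section

open Matrix

variable {d : ℕ} {H : Matrix (Fin d) (Fin d) ℝ} {K : (Fin d → ℝ) → ℝ}

theorem Measurable.kernelScaled (hK : Measurable K) : Measurable (kernelScaled H K) :=
  measurable_const.mul (hK.comp (continuous_const.matrix_mulVec continuous_id).measurable)

theorem abs_kernelScaled_le {C : ℝ} (hK : ∀ u, |K u| ≤ C) (v : Fin d → ℝ) :
    |kernelScaled H K v| ≤ |H.det|⁻¹ * C := by
  rw [kernelScaled, abs_mul, abs_inv, abs_abs]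
  exact mul_le_mul_of_nonneg_left (hK _) (by positivity)

theorem kernelScaled_add_mulVec_sub (hH : H.det ≠ 0) (t p x : Fin d → ℝ) :
    kernelScaled H K (t + H *ᵥ p - x) = |H.det|⁻¹ * K (p - H⁻¹ *ᵥ (x - t)) := by
  rw [kernelScaled, show t + H *ᵥ p - x = H *ᵥ p - (x - t) by abel, mulVec_sub, mulVec_mulVec,
    nonsing_inv_mul H (isUnit_iff_ne_zero.mpr hH), one_mulVec]

variable {ρ : (Fin d → ℝ) → ℝ} (x t : Fin d → ℝ)

theorem integrable_kernelScaled_mul {CK Cρ : ℝ} (hKmeas : Measurable K) (hK : ∀ u, |K u| ≤ CK)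
    (hρmeas : Measurable ρ) (hρ : ∀ u, |ρ u| ≤ Cρ)
    (ν : Measure ((Fin d → ℝ) × (Fin d → ℝ))) [IsFiniteMeasure ν] :
    Integrable (fun z => kernelScaled H K (z.1 - x) * kernelScaled H K (z.1 - t) *
      kernelScaled H K (z.2 - x) * kernelScaled H K (z.2 - t) * ρ (z.1 - z.2) ^ 2) ν := by
  have hKH := hKmeas.kernelScaled (H := H)
  have hCK : 0 ≤ CK := (abs_nonneg _).trans (hK 0)
  set B := |H.det|⁻¹ * CK
  refine .of_bound (by fun_prop) (B * B * B * B * Cρ ^ 2) (ae_of_all _ fun z => ?_)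
  simp only [Real.norm_eq_abs, abs_mul, abs_pow]
  gcongr <;> first | exact abs_kernelScaled_le hK _ | exact hρ _

theorem kernelScaled_mul_add_mulVec (hH : H.det ≠ 0) (hKeven : ∀ u, K (-u) = K u)
    (p q : Fin d → ℝ) :
    kernelScaled H K (t + H *ᵥ p - x) * kernelScaled H K (t + H *ᵥ p - t) *
        kernelScaled H K (t + H *ᵥ q - x) * kernelScaled H K (t + H *ᵥ q - t) *
        ρ (t + H *ᵥ p - (t + H *ᵥ q)) ^ 2 =
      (|H.det| ^ 4)⁻¹ * (K (-p + H⁻¹ *ᵥ (x - t)) * K (-q + H⁻¹ *ᵥ (x - t)) *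
        K p * K q * ρ (H *ᵥ (p - q)) ^ 2) := by
  have hKflip : ∀ p, K (p - H⁻¹ *ᵥ (x - t)) = K (-p + H⁻¹ *ᵥ (x - t)) := fun p => by
    rw [← hKeven, neg_sub, neg_add_eq_sub]
  simp only [kernelScaled_add_mulVec_sub hH, add_sub_add_left_eq_sub, ← mulVec_sub, sub_self,
    mulVec_zero, sub_zero, hKflip]
  ring

end

theorem expectation_W5n_general {d : ℕ}
    {Ω : Type*} [MeasurableSpace Ω] (μ : Measure Ω) [IsProbabilityMeasure μ]
    (X Y : Ω → (Fin d → ℝ)) (hXmeas : Measurable X) (hYmeas : Measurable Y)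
    (hindep : IndepFun X Y μ)
    (f : (Fin d → ℝ) → ℝ) (hfmeas : Measurable f) (hfnonneg : ∀ y, 0 ≤ f y)
    (hlawX : μ.map X = volume.withDensity (fun y => ENNReal.ofReal (f y)))
    (hlawY : μ.map Y = volume.withDensity (fun y => ENNReal.ofReal (f y)))
    (H : Matrix (Fin d) (Fin d) ℝ) (hH : H.det ≠ 0)
    (K : (Fin d → ℝ) → ℝ) (hKmeas : Measurable K) (hKbd : ∃ C, ∀ u, |K u| ≤ C)
    (hKeven : ∀ u, K (-u) = K u)
    (ρ : (Fin d → ℝ) → ℝ) (hρmeas : Measurable ρ) (hρbd : ∃ C, ∀ u, |ρ u| ≤ C)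
    (x t : Fin d → ℝ) :
    ∫ ω, kernelScaled H K (X ω - x) * kernelScaled H K (X ω - t) *
        kernelScaled H K (Y ω - x) * kernelScaled H K (Y ω - t) * (ρ (X ω - Y ω)) ^ 2 ∂μ =
      (|H.det| ^ 2)⁻¹ *
        ∫ p, ∫ q, K (-p + H⁻¹.mulVec (x - t)) * K (-q + H⁻¹.mulVec (x - t)) *
          K p * K q * (ρ (H.mulVec (p - q))) ^ 2 *
          f (t + H.mulVec p) * f (t + H.mulVec q) := by
  obtain ⟨CK, hCK⟩ := hKbd
  obtain ⟨Cρ, hCρ⟩ := hρbd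
  set G : (Fin d → ℝ) × (Fin d → ℝ) → ℝ := fun z =>
    kernelScaled H K (z.1 - x) * kernelScaled H K (z.1 - t) *
      kernelScaled H K (z.2 - x) * kernelScaled H K (z.2 - t) * ρ (z.1 - z.2) ^ 2
  have hG : Integrable G ((μ.map X).prod (μ.map Y)) :=
    integrable_kernelScaled_mul x t hKmeas hCK hρmeas hCρ ((μ.map X).prod (μ.map Y))
  calc _ = ∫ u, ∫ v, f u * (f v * G (u, v)) := by
        rw [hindep.integral_comp_prodMk hXmeas.aemeasurable hYmeas.aemeasurable hG, hlawX, hlawY]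
        simp_rw [integral_withDensity_ofReal hfmeas.aemeasurable (ae_of_all _ hfnonneg),
          smul_eq_mul, integral_const_mul]
    _ = (|H.det| ^ 2)⁻¹ * ∫ p, ∫ q, |H.det| ^ 4 * (f (t + H.mulVec p) *
          (f (t + H.mulVec q) * G (t + H.mulVec p, t + H.mulVec q))) := by
        simp_rw [integral_const_mul (|H.det| ^ 4),
          integral_integral_comp_add_mulVec hH t (fun u v => f u * (f v * G (u, v))), smul_eq_mul]
        field_simp
    _ = _ := by
        congr! 5 with p q
        simp only [G]
        rw [kernelScaled_mul_add_mulVec x t hH hKeven]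
        field_simp

/-- Expectation computation in Lemma 5:
`E[K_H(X−x) K_H(X−t) K_H(Y−x) K_H(Y−t) ρ(X−Y)²]
  = |det H|⁻² ∫∫ K(−p+H⁻¹(x−t)) K(−q+H⁻¹(x−t)) K(p) K(q) ρ(H(p−q))² f(t+Hp) f(t+Hq) dp dq`. -/
theorem expectation_W5n {d : ℕ} (hd : 1 ≤ d)
    {Ω : Type*} [MeasurableSpace Ω] (μ : Measure Ω) [IsProbabilityMeasure μ]
    (X Y : Ω → (Fin d → ℝ)) (hXmeas : Measurable X) (hYmeas : Measurable Y)
    (hindep : IndepFun X Y μ)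
    (f : (Fin d → ℝ) → ℝ) (hfmeas : Measurable f) (hfnonneg : ∀ y, 0 ≤ f y)
    (hlawX : μ.map X = volume.withDensity (fun y => ENNReal.ofReal (f y)))
    (hlawY : μ.map Y = volume.withDensity (fun y => ENNReal.ofReal (f y)))
    (H : Matrix (Fin d) (Fin d) ℝ) (hH : H.det ≠ 0)
    (K : (Fin d → ℝ) → ℝ) (hKmeas : Measurable K) (hKbd : ∃ C, ∀ u, |K u| ≤ C)
    (hKsupp : HasCompactSupport K) (hKeven : ∀ u, K (-u) = K u)
    (ρ : (Fin d → ℝ) → ℝ) (hρmeas : Measurable ρ) (hρbd : ∃ C, ∀ u, |ρ u| ≤ C)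
    (x t : Fin d → ℝ) :
    ∫ ω, kernelScaled H K (X ω - x) * kernelScaled H K (X ω - t) *
        kernelScaled H K (Y ω - x) * kernelScaled H K (Y ω - t) * (ρ (X ω - Y ω)) ^ 2 ∂μ =
      (|H.det| ^ 2)⁻¹ *
        ∫ p, ∫ q, K (-p + H⁻¹.mulVec (x - t)) * K (-q + H⁻¹.mulVec (x - t)) *
          K p * K q * (ρ (H.mulVec (p - q))) ^ 2 *
          f (t + H.mulVec p) * f (t + H.mulVec q) :=
  expectation_W5n_general μ X Y hXmeas hYmeas hindep f hfmeas hfnonneg hlawX hlawY H hH K hKmeas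
    hKbd hKeven ρ hρmeas hρbd x t
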